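/- arXiv:1812.07746 — 2 statements merged into one kernel-verified Lean document; each statement's English description precedes it below -/
import Mathlib

section
/- Under the recognition setup (conditions (1)–(5)), assume additionally that wt(v) ∈ Q⁻ for all v ∈ B. Then for every a ∈ I^im and every v ∈ B: κ_a(v) = φ_a((e_a^⋆)^k v) ≥ 0, where k = tε_a^⋆(v); and if e_a^⋆ v ≠ 0, then κ_a(e_a^⋆ v) = κ_a(v). -/
/-! Abstract crystals for generalized Kac–Moody (Borcherds) algebras. -/

/-- A Borcherds–Cartan matrix: integer matrix with `A a a = 2` or `A a a` nonpositive even,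
nonpositive off-diagonal entries, and `A a b = 0 ↔ A b a = 0`. -/
structure IsBorcherdsCartan {I : Type*} (A : I → I → ℤ) : Prop where
  diag : ∀ a, A a a = 2 ∨ (A a a ≤ 0 ∧ Even (A a a))
  offdiag : ∀ a b, a ≠ b → A a b ≤ 0
  zero_iff : ∀ a b, A a b = 0 ↔ A b a = 0

/-- The data of a crystal structure on a set `B`: partial operators `e`, `f`,
string functions `eps`, `phi` valued in `ℤ ∪ {-∞}`, and a weight function valued in the
root lattice `Q = ⊕_{a ∈ I} ℤ α_a`, modelled as `I →₀ ℤ` (so `α_a = Finsupp.single a 1`). -/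
structure CrystalStructure (I B : Type*) where
  e : I → B → Option B
  f : I → B → Option B
  eps : I → B → WithBot ℤ
  phi : I → B → WithBot ℤ
  wt : B → I →₀ ℤ

variable {I B : Type*}

/-- The pairing `⟨h_a, μ⟩` determined by `⟨h_a, α_b⟩ = A a b`. -/
def pairing (A : I → I → ℤ) (a : I) (μ : I →₀ ℤ) : ℤ :=
  μ.sum fun b m => A a b * m

/-- The axioms of an abstract `U_q(g)`-crystal for a Borcherds–Cartan matrix `A`. -/
def IsAbstractCrystal (A : I → I → ℤ) (C : CrystalStructure I B) : Prop :=
  (∀ a v w, C.e a v = some w → C.wt w = C.wt v + Finsupp.single a 1) ∧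
  (∀ a v w, C.f a v = some w → C.wt w = C.wt v - Finsupp.single a 1) ∧
  (∀ a v, C.phi a v = C.eps a v + ((pairing A a (C.wt v) : ℤ) : WithBot ℤ)) ∧
  (∀ a v w, C.f a v = some w ↔ C.e a w = some v) ∧
  (∀ a v w, C.e a v = some w →
    (A a a = 2 → C.eps a w + 1 = C.eps a v ∧ C.phi a w = C.phi a v + 1) ∧
    (A a a ≤ 0 → C.eps a w = C.eps a v ∧ C.phi a w = C.phi a v + ((A a a : ℤ) : WithBot ℤ))) ∧
  (∀ a v w, C.f a v = some w →
    (A a a = 2 → C.eps a w = C.eps a v + 1 ∧ C.phi a w + 1 = C.phi a v) ∧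
    (A a a ≤ 0 → C.eps a w = C.eps a v ∧ C.phi a w + ((A a a : ℤ) : WithBot ℤ) = C.phi a v)) ∧
  (∀ a v, C.phi a v = ⊥ → C.e a v = none ∧ C.f a v = none)

/-- One step in the crystal graph. -/
def CrystalStep (C : CrystalStructure I B) (v w : B) : Prop :=
  ∃ a, C.e a v = some w ∨ C.f a v = some w

/-- A crystal is connected if any two elements are joined by a chain of crystal operators. -/
def CrystalConnected (C : CrystalStructure I B) : Prop :=
  ∀ v w, Relation.ReflTransGen (CrystalStep C) v w

/-- Iteration of a partial map. -/
def iterOpt {α : Type*} (g : α → Option α) : ℕ → α → Option α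
  | 0, v => some v
  | k + 1, v => (iterOpt g k v).bind g

/-- `κ_a(v)`, defined from the two crystal structures via the maximal numbers of times
the operators `e_a` resp. `e_a^⋆` can be applied (`te`, `teS`). -/
def kappaFun (A : I → I → ℤ) (C : CrystalStructure I B) (te teS : I → B → ℕ) (a : I) (v : B) : ℤ :=
  if A a a = 2 then (te a v : ℤ) + (teS a v : ℤ) + pairing A a (C.wt v)
  else 0 + (teS a v : ℤ) * A a a + pairing A a (C.wt v)


section AuxRecog

lemma iterOpt_succ' {α : Type*} (g : α → Option α) (k : ℕ) (v : α) :
    iterOpt g (k + 1) v = (g v).bind (iterOpt g k) := by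
  induction k generalizing v with
  | zero => cases h : g v <;> simp [iterOpt, h]
  | succ k ih =>
    show (iterOpt g (k+1) v).bind g = _
    rw [ih]
    cases h : g v <;> simp [iterOpt]

lemma iterOpt_none_mono {α : Type*} (g : α → Option α) {k l : ℕ} (hkl : k ≤ l) (v : α)
    (h : iterOpt g k v = none) : iterOpt g l v = none := by
  induction l, hkl using Nat.le_induction with
  | base => exact h
  | succ l _ ih => show (iterOpt g l v).bind g = none; rw [ih]; rfl

lemma pairing_add {I : Type*} (A : I → I → ℤ) (a : I) (μ ν : I →₀ ℤ) :
    pairing A a (μ + ν) = pairing A a μ + pairing A a ν :=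
  Finsupp.sum_add_index' (fun b => mul_zero _) (fun b m n => mul_add _ m n)

lemma pairing_single {I : Type*} (A : I → I → ℤ) (a b : I) (n : ℤ) :
    pairing A a (Finsupp.single b n) = A a b * n :=
  Finsupp.sum_single_index (mul_zero _)

lemma pairing_nonneg {I : Type*} {A : I → I → ℤ} (hA : IsBorcherdsCartan A) {a : I}
    (ha : A a a ≤ 0) (μ : I →₀ ℤ) (hμ : ∀ b, μ b ≤ 0) : 0 ≤ pairing A a μ := by
  unfold pairing Finsupp.sum
  apply Finset.sum_nonneg
  intro b _
  have hab : A a b ≤ 0 := by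
    rcases eq_or_ne a b with rfl | h
    · exact ha
    · exact hA.offdiag a b h
  have := mul_nonneg (neg_nonneg.2 hab) (neg_nonneg.2 (hμ b))
  simpa using this

end AuxRecog

/-- Under the recognition setup, if all weights lie in `Q⁻`, then for imaginary `a` and
every `v`: `κ_a(v) = φ_a((e_a^⋆)^k v) ≥ 0` where `k = tε_a^⋆(v)`, and if `e_a^⋆ v ≠ 0`
then `κ_a(e_a^⋆ v) = κ_a(v)`. -/
theorem recognition_kappa_imaginary
    {I B : Type*} (A : I → I → ℤ) (hA : IsBorcherdsCartan A)
    (C S : CrystalStructure I B)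
    (hC : IsAbstractCrystal A C) (hS : IsAbstractCrystal A S)
    (hwt : S.wt = C.wt)
    (hconnC : CrystalConnected C) (hconnS : CrystalConnected S)
    (v0 : B)
    (hv0C : ∀ a, C.e a v0 = none) (hv0S : ∀ a, S.e a v0 = none)
    (hwt0 : C.wt v0 = 0) (huniq : ∀ v, C.wt v = 0 → v = v0)
    (te teS : I → B → ℕ)
    (hte : ∀ a v, iterOpt (C.e a) (te a v) v ≠ none ∧ iterOpt (C.e a) (te a v + 1) v = none)
    (hteS : ∀ a v, iterOpt (S.e a) (teS a v) v ≠ none ∧ iterOpt (S.e a) (teS a v + 1) v = none)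
    (heps : ∀ a v, (A a a = 2 → C.eps a v = ((te a v : ℤ) : WithBot ℤ)) ∧
      (A a a ≤ 0 → C.eps a v = 0))
    (hepsS : ∀ a v, (A a a = 2 → S.eps a v = ((teS a v : ℤ) : WithBot ℤ)) ∧
      (A a a ≤ 0 → S.eps a v = 0))
    (h1 : ∀ a v, C.f a v ≠ none ∧ S.f a v ≠ none)
    (h2 : ∀ a b, a ≠ b → ∀ v, (C.f b v).bind (S.f a) = (S.f a v).bind (C.f b)
      ∧ (∀ w, C.f b v = some w → teS a w = teS a v)
      ∧ (∀ w, S.f a v = some w → te b w = te b v))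
    (h3 : ∀ a v, kappaFun A C te teS a v = 0 → C.f a v = S.f a v)
    (h4 : ∀ a v, A a a = 2 → 0 ≤ kappaFun A C te teS a v
      ∧ (1 ≤ kappaFun A C te teS a v →
          (∀ w, C.f a v = some w → S.eps a w = S.eps a v) ∧
          (∀ w, S.f a v = some w → C.eps a w = C.eps a v))
      ∧ (2 ≤ kappaFun A C te teS a v → (C.f a v).bind (S.f a) = (S.f a v).bind (C.f a)))
    (h5 : ∀ a v, A a a ≤ 0 → 0 < kappaFun A C te teS a v →
      (∀ w, C.f a v = some w → teS a w = teS a v) ∧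
      (C.f a v).bind (S.f a) = (S.f a v).bind (C.f a))
    (hQneg : ∀ (v : B) (b : I), C.wt v b ≤ 0) :
    ∀ a, A a a ≤ 0 → ∀ v : B,
      (0 ≤ kappaFun A C te teS a v) ∧
      (∀ v', iterOpt (S.e a) (teS a v) v = some v' →
        C.phi a v' = ((kappaFun A C te teS a v : ℤ) : WithBot ℤ)) ∧
      (∀ w, S.e a v = some w → kappaFun A C te teS a w = kappaFun A C te teS a v) := by
  intro a ha v
  have hne2 : A a a ≠ 2 := by omega
  have hk : ∀ u : B, kappaFun A C te teS a u
      = (teS a u : ℤ) * A a a + pairing A a (C.wt u) := by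
    intro u
    simp [kappaFun, hne2]
  have hwtstep : ∀ v w : B, S.e a v = some w → C.wt w = C.wt v + Finsupp.single a 1 := by
    intro v w h
    have := hS.1 a v w h
    rwa [hwt] at this
  have hpairstep : ∀ v w : B, S.e a v = some w →
      pairing A a (C.wt w) = pairing A a (C.wt v) + A a a := by
    intro v w h
    rw [hwtstep v w h, pairing_add, pairing_single]
    ring
  have hteSstep : ∀ v w : B, S.e a v = some w → teS a v = teS a w + 1 := by
    intro v w h
    obtain ⟨h1v, h2v⟩ := hteS a v
    obtain ⟨h1w, h2w⟩ := hteS a w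
    have e1 : iterOpt (S.e a) (teS a w + 1) v = iterOpt (S.e a) (teS a w) w := by
      rw [iterOpt_succ', h]; rfl
    have e2 : iterOpt (S.e a) (teS a w + 2) v = none := by
      rw [show teS a w + 2 = (teS a w + 1) + 1 from rfl, iterOpt_succ', h]
      simpa using h2w
    by_contra hne
    rcases Nat.lt_or_ge (teS a v) (teS a w + 1) with hlt | hge
    · exact h1w (by rw [← e1]; exact iterOpt_none_mono _ (by omega) v h2v)
    · exact h1v (iterOpt_none_mono _ (by omega) v e2)
  have hkstep : ∀ v w : B, S.e a v = some w →
      kappaFun A C te teS a w = kappaFun A C te teS a v := by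
    intro v w h
    rw [hk, hk, hpairstep v w h, hteSstep v w h]
    push_cast
    ring
  have hkiter : ∀ (k : ℕ) (v v' : B), iterOpt (S.e a) k v = some v' →
      kappaFun A C te teS a v' = kappaFun A C te teS a v := by
    intro k
    induction k with
    | zero =>
      intro v v' h
      simp only [iterOpt] at h
      rw [Option.some.injEq] at h
      rw [h]
    | succ k ih =>
      intro v v' h
      rw [iterOpt_succ'] at h
      cases hw : S.e a v with
      | none => rw [hw] at h; exact absurd h (by simp)
      | some w =>
        rw [hw] at h
        simp only [Option.bind_some] at h
        rw [ih w v' h, hkstep v w hw]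
  have hte0 : ∀ v' : B, S.e a v' = none → teS a v' = 0 := by
    intro v' h
    by_contra h0
    obtain ⟨m, hm⟩ := Nat.exists_eq_succ_of_ne_zero h0
    have h1 := (hteS a v').1
    rw [hm, iterOpt_succ', h] at h1
    exact h1 rfl
  have key : ∀ v' : B, iterOpt (S.e a) (teS a v) v = some v' →
      kappaFun A C te teS a v = pairing A a (C.wt v') := by
    intro v' h
    have h0 : S.e a v' = none := by
      have h2 := (hteS a v).2
      have h3 : (iterOpt (S.e a) (teS a v) v).bind (S.e a) = none := h2
      rw [h] at h3
      simpa using h3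
    have hκ := hkiter (teS a v) v v' h
    rw [hk v'] at hκ
    rw [hte0 v' h0] at hκ
    simpa using hκ.symm
  refine ⟨?_, ?_, ?_⟩
  · cases hv' : iterOpt (S.e a) (teS a v) v with
    | none => exact absurd hv' (hteS a v).1
    | some v' =>
      rw [key v' hv']
      exact pairing_nonneg hA ha _ (hQneg v')
  · intro v' h
    have hp := key v' h
    have heps0 : C.eps a v' = 0 := (heps a v').2 ha
    have hphi := hC.2.2.1 a v'
    rw [hphi, heps0, hp, zero_add]
  · intro w h
    exact hkstep v w h
end

section
/- Suppose I = I^im (the Borcherds–Cartan matrix is purely imaginary). Let M be the monoid presented by generators {g_a : a ∈ I} and relations g_a g_{a'} = g_{a'} g_a for all a, a' ∈ I with A_{aa'} = 0 (a right-angled Artin monoid). Then the map M → RC(∞) sending the class of a word g_{a_1}⋯g_{a_r} to f_{a_1}⋯f_{a_r}(ν_∅,J_∅) is well defined and bijective. -/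
/-- A (raw) rigged configuration: for each color `a ∈ I`, a multiset of pairs
`(row length, rigging)`.  Rows of length `0` with rigging `0` are treated implicitly by the
operators below. -/
abbrev RCraw (I : Type*) := I → Multiset (ℕ × ℤ)

variable {I : Type*} [DecidableEq I]

/-- The empty rigged configuration `(ν_∅, J_∅)`. -/
def emptyRC : RCraw I := fun _ => 0

/-- `|ν^(b)|`, the number of boxes of color `b`. -/
def rcSize (ν : RCraw I) (b : I) : ℤ := ((ν b).map fun p => (p.1 : ℤ)).sum

/-- The vacancy number `p_i^(a) = -∑_b A a b ∑_{rows j of ν^(b)} min i j`. -/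
noncomputable def vac (A : I → I → ℤ) (ν : RCraw I) (a : I) (i : ℕ) : ℤ :=
  -∑ᶠ b, A a b * ((ν b).map fun p => (min i p.1 : ℤ)).sum

/-- The limiting vacancy number `p_∞^(a) = -∑_b A a b |ν^(b)| = ⟨h_a, wt(ν,J)⟩`. -/
noncomputable def pInf (A : I → I → ℤ) (ν : RCraw I) (a : I) : ℤ :=
  -∑ᶠ b, A a b * rcSize ν b

/-- Minimum of a multiset of integers together with `0` (the rigging of the implicit
length-`0` rows). -/
def minWith0 (s : Multiset ℤ) : ℤ := s.fold min 0

/-- Minimum of a nonempty multiset of integers (junk value `0` on the empty multiset). -/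
def minPosRows (s : Multiset ℤ) : ℤ := s.fold min (s.fold max 0)

/-- Maximum of a multiset of naturals together with `0`. -/
def maxWith0 (s : Multiset ℕ) : ℕ := s.fold max 0

/-- Minimum of a nonempty multiset of naturals (junk value on the empty multiset). -/
def minPosRowsN (s : Multiset ℕ) : ℕ := s.fold min (s.fold max 0)

/-- The crystal operator `f_a` on rigged configurations: add a box to a row of maximal
length among the rows of `ν^(a)` whose rigging equals the smallest rigging `x` (with the
length-`0` rows of rigging `0` included), give the new row the rigging `x - A a a / 2`, and
change all other riggings so that the coriggings are preserved. -/
def fOp (A : I → I → ℤ) (a : I) (ν : RCraw I) : RCraw I :=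
  let M := ν a
  let x := minWith0 (M.map Prod.snd)
  let ℓ := maxWith0 ((M.filter fun p => p.2 = x).map Prod.fst)
  fun b =>
    let adj : Multiset (ℕ × ℤ) → Multiset (ℕ × ℤ) :=
      Multiset.map fun p => (p.1, p.2 - if ℓ < p.1 then A b a else 0)
    if b = a then adj (M.erase (ℓ, x)) + {(ℓ + 1, x - A a a / 2)} else adj (ν b)

/-- Auxiliary for `eOp`: remove a box from a row of minimal (positive) length among the
rows of `ν^(a)` with rigging `x`, give it the rigging `x + A a a / 2` (dropping the row if
its length becomes `0`), and change all other riggings so that the coriggings are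
preserved. -/
def eRemove (A : I → I → ℤ) (a : I) (ν : RCraw I) (x : ℤ) : RCraw I :=
  let M := ν a
  let ℓ := minPosRowsN ((M.filter fun p => p.2 = x).map Prod.fst)
  fun b =>
    let adj : Multiset (ℕ × ℤ) → Multiset (ℕ × ℤ) :=
      Multiset.map fun p => (p.1, p.2 + if ℓ ≤ p.1 then A b a else 0)
    if b = a then
      adj (M.erase (ℓ, x)) + (if ℓ = 1 then 0 else {(ℓ - 1, x + A a a / 2)})
    else adj (ν b)

/-- The crystal operator `e_a` on rigged configurations. -/
def eOp (A : I → I → ℤ) (a : I) (ν : RCraw I) : Option (RCraw I) :=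
  if A a a = 2 then
    let x := minWith0 ((ν a).map Prod.snd)
    if x = 0 then none else some (eRemove A a ν x)
  else
    if ν a = 0 ∨ minPosRows ((ν a).map Prod.snd) ≠ -A a a / 2 then none
    else some (eRemove A a ν (-A a a / 2))

/-- The multiset of coriggings `p_i^(a) - x` of the (positive length) rows of `ν^(a)`. -/
noncomputable def corigs (A : I → I → ℤ) (ν : RCraw I) (a : I) : Multiset ℤ :=
  (ν a).map fun p => vac A ν a p.1 - p.2

open scoped Classical in
/-- The star crystal operator `f_a^*`: add a box to a row of maximal length among the rows
of `ν^(a)` whose corigging equals the smallest corigging `x` (with the length-`0` rows of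
corigging `0` included), set the rigging of the new row so that its corigging is
`x - A a a / 2`, and keep all other riggings fixed. -/
noncomputable def fStar (A : I → I → ℤ) (a : I) (ν : RCraw I) : RCraw I :=
  let M := ν a
  let x := minWith0 (corigs A ν a)
  let ℓ := maxWith0 ((M.filter fun p => vac A ν a p.1 - p.2 = x).map Prod.fst)
  fun b =>
    if b = a then
      M.erase (ℓ, vac A ν a ℓ - x) + {(ℓ + 1, (vac A ν a (ℓ + 1) - A a a) - (x - A a a / 2))}
    else ν b

open scoped Classical in
/-- Auxiliary for `eStarOp`: remove a box from a row of minimal (positive) length among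
the rows of `ν^(a)` with corigging `x`, set its rigging so that its corigging is
`x - A a a / 2` (dropping the row if its length becomes `0`), and keep all other riggings
fixed. -/
noncomputable def eStarRemove (A : I → I → ℤ) (a : I) (ν : RCraw I) (x : ℤ) : RCraw I :=
  let M := ν a
  let ℓ := minPosRowsN ((M.filter fun p => vac A ν a p.1 - p.2 = x).map Prod.fst)
  fun b =>
    if b = a then
      M.erase (ℓ, vac A ν a ℓ - x) +
        (if ℓ = 1 then 0 else {(ℓ - 1, vac A ν a (ℓ - 1) - (x - A a a / 2))})
    else ν b

/-- The star crystal operator `e_a^*`. -/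
noncomputable def eStarOp (A : I → I → ℤ) (a : I) (ν : RCraw I) : Option (RCraw I) :=
  if A a a = 2 then
    let x := minWith0 (corigs A ν a)
    if x = 0 then none else some (eStarRemove A a ν x)
  else
    if ν a = 0 ∨ minPosRows (corigs A ν a) ≠ -A a a / 2 then none
    else some (eStarRemove A a ν (-A a a / 2))

/-- `RC(∞)`: the set of rigged configurations generated from the empty rigged
configuration by the operators `e_a`, `f_a`. -/
inductive RCinf (A : I → I → ℤ) : RCraw I → Prop
  | empty : RCinf A emptyRC
  | fstep (a : I) (ν : RCraw I) : RCinf A ν → RCinf A (fOp A a ν)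
  | estep (a : I) (ν ν' : RCraw I) : RCinf A ν → eOp A a ν = some ν' → RCinf A ν'

/-- `RC(∞)^*`: the set of rigged configurations generated from the empty rigged
configuration by the operators `e_a^*`, `f_a^*`. -/
inductive RCinfStar (A : I → I → ℤ) : RCraw I → Prop
  | empty : RCinfStar A emptyRC
  | fstep (a : I) (ν : RCraw I) : RCinfStar A ν → RCinfStar A (fStar A a ν)
  | estep (a : I) (ν ν' : RCraw I) : RCinfStar A ν → eStarOp A a ν = some ν' → RCinfStar A ν'

/-- `tε_a(ν,J) = max {k | e_a^k (ν,J) ≠ 0}`. -/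
noncomputable def teRC (A : I → I → ℤ) (a : I) (ν : RCraw I) : ℕ :=
  sSup {k | iterOpt (eOp A a) k ν ≠ none}

/-- `tε_a^*(ν,J) = max {k | (e_a^*)^k (ν,J) ≠ 0}`. -/
noncomputable def teStarRC (A : I → I → ℤ) (a : I) (ν : RCraw I) : ℕ :=
  sSup {k | iterOpt (eStarOp A a) k ν ≠ none}

/-- `ε_a`: for real `a` the maximal number of applications of `e_a`, for imaginary `a`
zero. -/
noncomputable def epsRC (A : I → I → ℤ) (a : I) (ν : RCraw I) : ℤ :=
  if A a a = 2 then (teRC A a ν : ℤ) else 0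

/-- `φ_a(ν,J) = ⟨h_a, wt(ν,J)⟩ + ε_a(ν,J)`. -/
noncomputable def phiRC (A : I → I → ℤ) (a : I) (ν : RCraw I) : ℤ :=
  pInf A ν a + epsRC A a ν

/-- `ε_a^*`: for real `a` the maximal number of applications of `e_a^*`, for imaginary `a`
zero. -/
noncomputable def epsStarRC (A : I → I → ℤ) (a : I) (ν : RCraw I) : ℤ :=
  if A a a = 2 then (teStarRC A a ν : ℤ) else 0

/-- `φ_a^*(ν,J) = ⟨h_a, wt(ν,J)⟩ + ε_a^*(ν,J)`. -/
noncomputable def phiStarRC (A : I → I → ℤ) (a : I) (ν : RCraw I) : ℤ :=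
  pInf A ν a + epsStarRC A a ν

/-- The weight of a rigged configuration, as the coefficient function of
`-∑_a |ν^(a)| α_a`. -/
def wtRC (ν : RCraw I) : I → ℤ := fun b => -rcSize ν b

/-- For imaginary `a`, `κ_a(ν,J) = tε_a^*(ν,J)·A a a + ⟨h_a, wt(ν,J)⟩`. -/
noncomputable def kappaRC (A : I → I → ℤ) (a : I) (ν : RCraw I) : ℤ :=
  (teStarRC A a ν : ℤ) * A a a + pInf A ν a

/-- For imaginary `a`, `κ_a^*(ν,J) = tε_a(ν,J)·A a a + ⟨h_a, wt(ν,J)⟩`. -/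
noncomputable def kappaStarRC (A : I → I → ℤ) (a : I) (ν : RCraw I) : ℤ :=
  (teRC A a ν : ℤ) * A a a + pInf A ν a

/-- The defining relations of the right-angled Artin monoid
`⟨g_a | g_a g_{a'} = g_{a'} g_a if A a a' = 0⟩`. -/
def raagRel (A : I → I → ℤ) : FreeMonoid I → FreeMonoid I → Prop := fun x y =>
  ∃ a a' : I, A a a' = 0 ∧
    x = FreeMonoid.of a * FreeMonoid.of a' ∧ y = FreeMonoid.of a' * FreeMonoid.of a

/-!
Every configuration `f_{a_1} ⋯ f_{a_r}(ν_∅, J_∅)` is *admissible*: its rows have positive length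
and riggings at least `-A_aa / 2`, and the rows attaining this bound (the fresh rows, the only ones
`e_a` can act on) number at most one per colour and never occur in two adjacent colours at once.
On admissible configurations `e_a f_a` is the identity, `e_a f_b = 0` for adjacent `a ≠ b`, and
`e_a` commutes with `f_b` when `A_ab = 0`, just as `f_a` and `f_b` do. So `e_a` is defined on the
image of `m` exactly when `m = g_a m'`, and then it returns the image of `m'`. Cancelling first
letters one at a time gives injectivity, and the same fact shows that `e_a` never leaves the image.
-/

namespace Multiset

variable {α : Type*}

theorem filter_erase [DecidableEq α] (p : α → Prop) [DecidablePred p] (s : Multiset α) (a : α) :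
    (s.erase a).filter p = (s.filter p).erase a := by
  ext b
  by_cases hb : b = a
  · subst hb
    by_cases hp : p b <;> simp [hp]
  · by_cases hp : p b <;> simp [count_erase_of_ne hb, hp]

theorem filter_le_filter_of_imp {p q : α → Prop} [DecidablePred p] [DecidablePred q]
    {s : Multiset α} (h : ∀ x ∈ s, p x → q x) : s.filter p ≤ s.filter q := by
  have : s.filter p = (s.filter q).filter p := by
    rw [filter_filter]
    exact filter_congr fun x hx => ⟨fun hpx => ⟨hpx, h x hx hpx⟩, And.left⟩
  rw [this]
  exact filter_le _ _

theorem fold_min_eq_finset_fold [LinearOrder α] (s : Multiset α) (b : α) :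
    s.fold min b = s.toFinset.fold min b id := by
  rw [Finset.fold, map_id, ← fold_dedup_idem]
  rfl

theorem fold_max_eq_finset_fold [LinearOrder α] (s : Multiset α) (b : α) :
    s.fold max b = s.toFinset.fold max b id := by
  rw [Finset.fold, map_id, ← fold_dedup_idem]
  rfl

end Multiset

theorem minWith0_eq_zero_of_nonneg {s : Multiset ℤ} (h : ∀ t ∈ s, 0 ≤ t) : minWith0 s = 0 := by
  rw [minWith0, Multiset.fold_min_eq_finset_fold]
  refine le_antisymm ((Finset.fold_min_le _).2 (Or.inl le_rfl)) ?_
  exact (Finset.le_fold_min _).2 ⟨le_rfl, by simpa using h⟩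

theorem minPosRows_eq_of_forall_le {s : Multiset ℤ} {c : ℤ} (hc : c ∈ s) (h : ∀ t ∈ s, c ≤ t) :
    minPosRows s = c := by
  have hc' : c ∈ s.toFinset := Multiset.mem_toFinset.2 hc
  rw [minPosRows, Multiset.fold_min_eq_finset_fold, Multiset.fold_max_eq_finset_fold]
  refine le_antisymm ((Finset.fold_min_le _).2 (Or.inr ⟨c, hc', le_rfl⟩)) ?_
  exact (Finset.le_fold_min _).2
    ⟨(Finset.le_fold_max _).2 (Or.inr ⟨c, hc', le_rfl⟩), by simpa using h⟩

theorem lt_minPosRows {s : Multiset ℤ} {c : ℤ} (hs : s ≠ 0) (h : ∀ t ∈ s, c < t) :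
    c < minPosRows s := by
  obtain ⟨t, ht⟩ := Multiset.exists_mem_of_ne_zero hs
  rw [minPosRows, Multiset.fold_min_eq_finset_fold, Multiset.fold_max_eq_finset_fold]
  refine (Finset.lt_fold_min _).2 ⟨?_, by simpa using h⟩
  exact (Finset.lt_fold_max _).2 (Or.inr ⟨t, Multiset.mem_toFinset.2 ht, h t ht⟩)

theorem maxWith0_mem {s : Multiset ℕ} (h : maxWith0 s ≠ 0) : maxWith0 s ∈ s := by
  have key := le_refl (maxWith0 s)
  rw [maxWith0, Multiset.fold_max_eq_finset_fold] at key h ⊢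
  rcases (Finset.le_fold_max _).1 key with h0 | ⟨t, ht, hle⟩
  · exact absurd (Nat.le_zero.1 h0) h
  · have hge : t ≤ s.toFinset.fold max 0 id := (Finset.le_fold_max _).2 (Or.inr ⟨t, ht, le_rfl⟩)
    rw [← le_antisymm hge hle]
    simpa using ht

@[simp]
theorem maxWith0_singleton (n : ℕ) : maxWith0 ({n} : Multiset ℕ) = n := by
  simp [maxWith0, Multiset.fold_singleton]

@[simp]
theorem minPosRowsN_singleton (n : ℕ) : minPosRowsN ({n} : Multiset ℕ) = n := by
  simp [minPosRowsN, Multiset.fold_singleton]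

variable {A : I → I → ℤ}

section Selection

omit [DecidableEq I]

def fOpRigging (ν : RCraw I) (a : I) : ℤ := minWith0 ((ν a).map Prod.snd)

def fOpLength (ν : RCraw I) (a : I) : ℕ :=
  maxWith0 (((ν a).filter fun p => p.2 = fOpRigging ν a).map Prod.fst)

def eRemoveLength (ν : RCraw I) (a : I) (x : ℤ) : ℕ :=
  minPosRowsN (((ν a).filter fun p => p.2 = x).map Prod.fst)

end Selection

theorem fOp_apply_self (a : I) (ν : RCraw I) :
    fOp A a ν a = ((ν a).erase (fOpLength ν a, fOpRigging ν a)).map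
        (fun p => (p.1, p.2 - if fOpLength ν a < p.1 then A a a else 0)) +
      {(fOpLength ν a + 1, fOpRigging ν a - A a a / 2)} := by
  simp only [fOp, if_pos]
  rfl

theorem fOp_apply_of_ne {a c : I} (hc : c ≠ a) (ν : RCraw I) :
    fOp A a ν c =
      (ν c).map fun p => (p.1, p.2 - if fOpLength ν a < p.1 then A c a else 0) := by
  simp only [fOp, if_neg hc]
  rfl

theorem eRemove_apply_self (a : I) (ν : RCraw I) (x : ℤ) :
    eRemove A a ν x a = ((ν a).erase (eRemoveLength ν a x, x)).map
        (fun p => (p.1, p.2 + if eRemoveLength ν a x ≤ p.1 then A a a else 0)) +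
      if eRemoveLength ν a x = 1 then 0 else {(eRemoveLength ν a x - 1, x + A a a / 2)} := by
  simp only [eRemove, if_pos]
  rfl

theorem eRemove_apply_of_ne {a c : I} (hc : c ≠ a) (ν : RCraw I) (x : ℤ) :
    eRemove A a ν x c =
      (ν c).map fun p => (p.1, p.2 + if eRemoveLength ν a x ≤ p.1 then A c a else 0) := by
  simp only [eRemove, if_neg hc]
  rfl

theorem fOp_apply_of_eq_zero {a c : I} (hc : c ≠ a) (h : A c a = 0) (ν : RCraw I) :
    fOp A a ν c = ν c := by
  simp [fOp_apply_of_ne hc, h]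

theorem eRemove_apply_of_eq_zero {a c : I} (hc : c ≠ a) (h : A c a = 0) (ν : RCraw I) (x : ℤ) :
    eRemove A a ν x c = ν c := by
  simp [eRemove_apply_of_ne hc, h]

theorem fOp_apply_self_ne_zero (a : I) (ν : RCraw I) : fOp A a ν a ≠ 0 := by
  simp [fOp_apply_self]

section Commute

variable {a b : I} (hab : a ≠ b) (hab0 : A a b = 0) (hba0 : A b a = 0)
include hab hab0 hba0

theorem fOp_comm (ν : RCraw I) : fOp A a (fOp A b ν) = fOp A b (fOp A a ν) := by
  have ha : fOp A b ν a = ν a := fOp_apply_of_eq_zero hab hab0 ν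
  have hb : fOp A a ν b = ν b := fOp_apply_of_eq_zero hab.symm hba0 ν
  have hLa : fOpLength (fOp A b ν) a = fOpLength ν a := by
    unfold fOpLength fOpRigging; rw [ha]
  have hLb : fOpLength (fOp A a ν) b = fOpLength ν b := by
    unfold fOpLength fOpRigging; rw [hb]
  have hXa : fOpRigging (fOp A b ν) a = fOpRigging ν a := by
    unfold fOpRigging; rw [ha]
  have hXb : fOpRigging (fOp A a ν) b = fOpRigging ν b := by
    unfold fOpRigging; rw [hb]
  funext c
  by_cases hca : c = a
  · subst hca
    rw [fOp_apply_of_eq_zero hab hab0 (fOp A c ν), fOp_apply_self, fOp_apply_self, ha, hLa, hXa]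
  by_cases hcb : c = b
  · subst hcb
    rw [fOp_apply_of_eq_zero hab.symm hba0 (fOp A c ν), fOp_apply_self, fOp_apply_self, hb, hLb,
      hXb]
  rw [fOp_apply_of_ne hca, fOp_apply_of_ne hcb, fOp_apply_of_ne hcb, fOp_apply_of_ne hca, hLa, hLb,
    Multiset.map_map, Multiset.map_map]
  refine Multiset.map_congr rfl fun p _ => ?_
  simp only [Function.comp_apply, Prod.mk.injEq, true_and]
  ring

theorem eRemove_fOp_comm (ν : RCraw I) (x : ℤ) :
    eRemove A a (fOp A b ν) x = fOp A b (eRemove A a ν x) := by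
  have ha : fOp A b ν a = ν a := fOp_apply_of_eq_zero hab hab0 ν
  have hb : eRemove A a ν x b = ν b := eRemove_apply_of_eq_zero hab.symm hba0 ν x
  have hEa : eRemoveLength (fOp A b ν) a x = eRemoveLength ν a x := by
    unfold eRemoveLength; rw [ha]
  have hLb : fOpLength (eRemove A a ν x) b = fOpLength ν b := by
    unfold fOpLength fOpRigging; rw [hb]
  have hXb : fOpRigging (eRemove A a ν x) b = fOpRigging ν b := by
    unfold fOpRigging; rw [hb]
  funext c
  by_cases hca : c = a
  · subst hca
    rw [fOp_apply_of_eq_zero hab hab0, eRemove_apply_self, eRemove_apply_self, ha, hEa]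
  by_cases hcb : c = b
  · subst hcb
    rw [eRemove_apply_of_eq_zero hab.symm hba0, fOp_apply_self, fOp_apply_self, hb, hLb, hXb]
  rw [eRemove_apply_of_ne hca, fOp_apply_of_ne hcb, fOp_apply_of_ne hcb, eRemove_apply_of_ne hca,
    hEa, hLb, Multiset.map_map, Multiset.map_map]
  refine Multiset.map_congr rfl fun p _ => ?_
  simp only [Function.comp_apply, Prod.mk.injEq, true_and]
  ring

theorem eOp_fOp_comm (ha2 : A a a ≠ 2) (ν : RCraw I) :
    eOp A a (fOp A b ν) = (eOp A a ν).map (fOp A b) := by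
  simp only [eOp, if_neg ha2, fOp_apply_of_eq_zero hab hab0 ν]
  split_ifs
  · rfl
  · rw [Option.map_some, eRemove_fOp_comm hab hab0 hba0]

end Commute

theorem map_shift_sub_add_cancel (s : Multiset (ℕ × ℤ)) (ℓ : ℕ) (c : ℤ) :
    (s.map fun p => (p.1, p.2 - if ℓ < p.1 then c else 0)).map
      (fun p => (p.1, p.2 + if ℓ + 1 ≤ p.1 then c else 0)) = s := by
  rw [Multiset.map_map]
  conv_rhs => rw [← Multiset.map_id s]
  refine Multiset.map_congr rfl fun p _ => ?_
  simp only [Function.comp_apply, id, Nat.succ_le_iff]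
  split_ifs <;> simp

section Admissible

omit [DecidableEq I]

theorem IsBorcherdsCartan.even_diag_of_nonpos (hA : IsBorcherdsCartan A) {a : I}
    (ha : A a a ≤ 0) : Even (A a a) :=
  ((hA.diag a).resolve_left (by omega)).2

variable (A) in
def freshRows (ν : RCraw I) (a : I) : Multiset (ℕ × ℤ) :=
  (ν a).filter fun p => p.2 = -A a a / 2

variable (A) in
structure Admissible (ν : RCraw I) : Prop where
  length_pos : ∀ a, ∀ p ∈ ν a, 0 < p.1
  le_rigging : ∀ a, ∀ p ∈ ν a, -A a a / 2 ≤ p.2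
  card_freshRows_le_one : ∀ a, Multiset.card (freshRows A ν a) ≤ 1
  freshRows_eq_zero_or : ∀ a b, a ≠ b → A a b ≠ 0 → freshRows A ν a = 0 ∨ freshRows A ν b = 0

theorem admissible_emptyRC : Admissible A (emptyRC : RCraw I) := by
  constructor <;> simp [emptyRC, freshRows]

variable {ν : RCraw I} (hν : Admissible A ν)
include hν

theorem Admissible.freshRows_eq_zero_or_singleton (a : I) :
    freshRows A ν a = 0 ∨ ∃ q, freshRows A ν a = {q} := by
  rcases Nat.le_one_iff_eq_zero_or_eq_one.1 (hν.card_freshRows_le_one a) with h | h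
  · exact Or.inl (Multiset.card_eq_zero.1 h)
  · exact Or.inr (Multiset.card_eq_one.1 h)

theorem Admissible.fOpRigging_eq_zero (him : ∀ a, A a a ≤ 0) (a : I) : fOpRigging ν a = 0 :=
  minWith0_eq_zero_of_nonneg fun t ht => by
    obtain ⟨p, hp, rfl⟩ := Multiset.mem_map.1 ht
    have := hν.le_rigging a p hp
    have := him a
    omega

theorem Admissible.fOpLength_eq_of_diag_eq_zero (him : ∀ a, A a a ≤ 0) {a : I} (h0 : A a a = 0) :
    fOpLength ν a = maxWith0 ((freshRows A ν a).map Prod.fst) := by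
  rw [fOpLength, hν.fOpRigging_eq_zero him, freshRows, h0]
  rfl

theorem Admissible.fOpLength_eq_zero_of_diag_ne_zero (hA : IsBorcherdsCartan A)
    (him : ∀ a, A a a ≤ 0) {a : I} (h0 : A a a ≠ 0) : fOpLength ν a = 0 := by
  obtain ⟨r, hr⟩ := hA.even_diag_of_nonpos (him a)
  rw [fOpLength, hν.fOpRigging_eq_zero him, Multiset.filter_eq_nil.2, Multiset.map_zero]
  · rfl
  · intro p hp hp0
    have := hν.le_rigging a p hp
    have := him a
    omega

theorem Admissible.fOpLength_eq_zero_of_freshRows_eq_zero (hA : IsBorcherdsCartan A)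
    (him : ∀ a, A a a ≤ 0) {a : I} (h : freshRows A ν a = 0) : fOpLength ν a = 0 := by
  by_cases h0 : A a a = 0
  · rw [hν.fOpLength_eq_of_diag_eq_zero him h0, h]
    rfl
  · exact hν.fOpLength_eq_zero_of_diag_ne_zero hA him h0

theorem Admissible.fOpLength_mem (hA : IsBorcherdsCartan A) (him : ∀ a, A a a ≤ 0) {a : I}
    (h : fOpLength ν a ≠ 0) : (fOpLength ν a, 0) ∈ ν a := by
  have h0 : A a a = 0 := by
    by_contra h0
    exact h (hν.fOpLength_eq_zero_of_diag_ne_zero hA him h0)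
  rw [hν.fOpLength_eq_of_diag_eq_zero him h0] at h ⊢
  obtain ⟨p, hp, hp1⟩ := Multiset.mem_map.1 (maxWith0_mem h)
  obtain ⟨hpν, hp2⟩ := Multiset.mem_filter.1 hp
  rw [h0] at hp2
  rwa [← hp1, show (0 : ℤ) = p.2 by omega]

end Admissible

section AdmissibleFOp

variable {ν : RCraw I} (hν : Admissible A ν)
include hν

-- If `A a a = 0`, `f_a` lengthens the old fresh row, if any; otherwise it starts a new row and
-- lifts every old row of colour `a` strictly above the bound.
theorem Admissible.freshRows_fOp_self (hA : IsBorcherdsCartan A) (him : ∀ a, A a a ≤ 0) (a : I) :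
    freshRows A (fOp A a ν) a = {(fOpLength ν a + 1, -A a a / 2)} := by
  obtain ⟨r, hr⟩ := hA.even_diag_of_nonpos (him a)
  have hnew : (0 : ℤ) - A a a / 2 = -A a a / 2 := by omega
  rw [freshRows, fOp_apply_self, hν.fOpRigging_eq_zero him, hnew, Multiset.filter_add,
    Multiset.filter_singleton, if_pos rfl, Multiset.filter_eq_nil.2, zero_add]
  intro q hq hfresh
  obtain ⟨p, hp, rfl⟩ := Multiset.mem_map.1 hq
  have hpν := Multiset.mem_of_mem_erase hp
  have hle := hν.le_rigging a p hpν
  by_cases h0 : A a a = 0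
  · simp only [h0, ite_self, sub_zero] at hfresh
    have hp' : p ∈ (freshRows A ν a).erase (fOpLength ν a, 0) := by
      rw [freshRows, ← Multiset.filter_erase]
      exact Multiset.mem_filter.2 ⟨hp, hfresh.trans (by rw [h0])⟩
    rcases hν.freshRows_eq_zero_or_singleton a with h | ⟨q, hq⟩
    · simp [h] at hp'
    · have hq2 : q.2 = 0 := by
        have := (Multiset.mem_filter.1 (hq ▸ Multiset.mem_singleton_self q)).2
        rw [this, h0]
        rfl
      have hq1 : fOpLength ν a = q.1 := by
        rw [hν.fOpLength_eq_of_diag_eq_zero him h0, hq, Multiset.map_singleton,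
          maxWith0_singleton]
      rw [hq, hq1, ← hq2, Multiset.erase_singleton] at hp'
      simp at hp'
  · rw [hν.fOpLength_eq_zero_of_diag_ne_zero hA him h0, if_pos (hν.length_pos a p hpν)] at hfresh
    have := him a
    simp only at hfresh
    omega

theorem Admissible.card_freshRows_fOp_le (hA : IsBorcherdsCartan A) {a c : I} (hca : c ≠ a) :
    Multiset.card (freshRows A (fOp A a ν) c) ≤ Multiset.card (freshRows A ν c) := by
  rw [freshRows, fOp_apply_of_ne hca, Multiset.filter_map, Multiset.card_map]
  refine Multiset.card_le_card (Multiset.filter_le_filter_of_imp fun p hp hfresh => ?_)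
  have := hν.le_rigging c p hp
  have := hA.offdiag c a hca
  simp only [Function.comp_apply] at hfresh
  split_ifs at hfresh <;> omega

theorem Admissible.freshRows_fOp_eq_zero (hA : IsBorcherdsCartan A) {a c : I} (hca : c ≠ a)
    (h : freshRows A ν c = 0) : freshRows A (fOp A a ν) c = 0 := by
  have := hν.card_freshRows_fOp_le hA hca
  rw [h, Multiset.card_zero, Nat.le_zero, Multiset.card_eq_zero] at this
  exact this

theorem Admissible.freshRows_fOp_eq_zero_of_adjacent (hA : IsBorcherdsCartan A)
    (him : ∀ a, A a a ≤ 0) {a c : I} (hca : c ≠ a) (hadj : A c a ≠ 0) :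
    freshRows A (fOp A a ν) c = 0 := by
  rcases hν.freshRows_eq_zero_or c a hca hadj with hc | ha
  · exact hν.freshRows_fOp_eq_zero hA hca hc
  rw [freshRows, fOp_apply_of_ne hca, Multiset.filter_eq_nil]
  rintro _ hq hfresh
  obtain ⟨p, hp, rfl⟩ := Multiset.mem_map.1 hq
  rw [hν.fOpLength_eq_zero_of_freshRows_eq_zero hA him ha, if_pos (hν.length_pos c p hp)]
    at hfresh
  have := hν.le_rigging c p hp
  have := hA.offdiag c a hca
  simp only at hfresh
  omega

theorem admissible_fOp (hA : IsBorcherdsCartan A) (him : ∀ a, A a a ≤ 0) (a : I) :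
    Admissible A (fOp A a ν) where
  length_pos c p hp := by
    by_cases hca : c = a
    · subst hca
      rw [fOp_apply_self] at hp
      rcases Multiset.mem_add.1 hp with h | h
      · obtain ⟨q, hq, rfl⟩ := Multiset.mem_map.1 h
        exact hν.length_pos c q (Multiset.mem_of_mem_erase hq)
      · rw [Multiset.mem_singleton.1 h]
        exact Nat.succ_pos _
    · rw [fOp_apply_of_ne hca] at hp
      obtain ⟨q, hq, rfl⟩ := Multiset.mem_map.1 hp
      exact hν.length_pos c q hq
  le_rigging c p hp := by
    by_cases hca : c = a
    · subst hca
      obtain ⟨r, hr⟩ := hA.even_diag_of_nonpos (him c)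
      rw [fOp_apply_self, hν.fOpRigging_eq_zero him] at hp
      rcases Multiset.mem_add.1 hp with h | h
      · obtain ⟨q, hq, rfl⟩ := Multiset.mem_map.1 h
        have := hν.le_rigging c q (Multiset.mem_of_mem_erase hq)
        have := him c
        dsimp only
        split_ifs <;> omega
      · rw [Multiset.mem_singleton.1 h]
        dsimp only
        omega
    · rw [fOp_apply_of_ne hca] at hp
      obtain ⟨q, hq, rfl⟩ := Multiset.mem_map.1 hp
      have := hν.le_rigging c q hq
      have := hA.offdiag c a hca
      dsimp only
      split_ifs <;> omega
  card_freshRows_le_one c := by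
    by_cases hca : c = a
    · rw [hca, hν.freshRows_fOp_self hA him a, Multiset.card_singleton]
    · exact (hν.card_freshRows_fOp_le hA hca).trans (hν.card_freshRows_le_one c)
  freshRows_eq_zero_or b b' hbb' hadj := by
    by_cases hb : b = a
    · subst hb
      exact Or.inr (hν.freshRows_fOp_eq_zero_of_adjacent hA him hbb'.symm
        (fun h => hadj ((hA.zero_iff b b').2 h)))
    by_cases hb' : b' = a
    · subst hb'
      exact Or.inl (hν.freshRows_fOp_eq_zero_of_adjacent hA him hb hadj)
    exact (hν.freshRows_eq_zero_or b b' hbb' hadj).imp (hν.freshRows_fOp_eq_zero hA hb)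
      (hν.freshRows_fOp_eq_zero hA hb')

end AdmissibleFOp

section AdmissibleEOp

variable (hA : IsBorcherdsCartan A) (him : ∀ a, A a a ≤ 0) {ν : RCraw I} (hν : Admissible A ν)
include hA him hν

theorem Admissible.eRemove_fOp_self (a : I) :
    eRemove A a (fOp A a ν) (-A a a / 2) = ν := by
  obtain ⟨r, hr⟩ := hA.even_diag_of_nonpos (him a)
  have hlen : eRemoveLength (fOp A a ν) a (-A a a / 2) = fOpLength ν a + 1 := by
    rw [eRemoveLength, ← freshRows, hν.freshRows_fOp_self hA him a, Multiset.map_singleton,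
      minPosRowsN_singleton]
  funext c
  by_cases hca : c = a
  · subst hca
    have hnew : (0 : ℤ) - A c c / 2 = -A c c / 2 := by omega
    rw [eRemove_apply_self, hlen, fOp_apply_self, hν.fOpRigging_eq_zero him, hnew,
      Multiset.erase_add_right_pos _ (Multiset.mem_singleton_self _), Multiset.erase_singleton,
      add_zero, map_shift_sub_add_cancel, Nat.add_sub_cancel,
      show -A c c / 2 + A c c / 2 = 0 by omega]
    by_cases hℓ : fOpLength ν c = 0
    · have hnot : ((0 : ℕ), (0 : ℤ)) ∉ ν c := fun h => (hν.length_pos c _ h).ne rfl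
      rw [if_pos (by omega), add_zero, hℓ, Multiset.erase_of_notMem hnot]
    · rw [if_neg (by omega), add_comm, Multiset.singleton_add,
        Multiset.cons_erase (hν.fOpLength_mem hA him hℓ)]
  · rw [eRemove_apply_of_ne hca, hlen, fOp_apply_of_ne hca, map_shift_sub_add_cancel]

theorem Admissible.eOp_fOp_self (a : I) : eOp A a (fOp A a ν) = some ν := by
  have hν' := admissible_fOp hν hA him a
  have hmem : (fOpLength ν a + 1, -A a a / 2) ∈ fOp A a ν a :=
    Multiset.mem_of_mem_filter (s := fOp A a ν a) <| by
      rw [← freshRows, hν.freshRows_fOp_self hA him a]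
      exact Multiset.mem_singleton_self _
  have hmin : minPosRows ((fOp A a ν a).map Prod.snd) = -A a a / 2 :=
    minPosRows_eq_of_forall_le (Multiset.mem_map_of_mem _ hmem) fun t ht => by
      obtain ⟨p, hp, rfl⟩ := Multiset.mem_map.1 ht
      exact hν'.le_rigging a p hp
  have ha2 : A a a ≠ 2 := by have := him a; omega
  simp only [eOp, if_neg ha2, hmin, fOp_apply_self_ne_zero, ne_eq, not_true_eq_false, or_self,
    if_false, hν.eRemove_fOp_self hA him a]

theorem Admissible.eOp_fOp_of_adjacent {a b : I} (hab : a ≠ b) (hadj : A a b ≠ 0) :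
    eOp A a (fOp A b ν) = none := by
  have hν' := admissible_fOp hν hA him b
  have hfresh := hν.freshRows_fOp_eq_zero_of_adjacent hA him hab hadj
  have ha2 : A a a ≠ 2 := by have := him a; omega
  simp only [eOp, if_neg ha2]
  rw [if_pos (or_iff_not_imp_left.2 fun hne => (lt_minPosRows ?_ ?_).ne')]
  · exact fun h => hne (Multiset.map_eq_zero.1 h)
  · intro t ht
    obtain ⟨p, hp, rfl⟩ := Multiset.mem_map.1 ht
    refine (hν'.le_rigging a p hp).lt_of_ne fun h => ?_
    have : p ∈ freshRows A (fOp A b ν) a := Multiset.mem_filter.2 ⟨hp, h.symm⟩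
    simp [hfresh] at this

end AdmissibleEOp

theorem PresentedMonoid.inductionOn' {α : Type*} {rels : FreeMonoid α → FreeMonoid α → Prop}
    {motive : PresentedMonoid rels → Prop} (m : PresentedMonoid rels) (one : motive 1)
    (of_mul : ∀ a m, motive m → motive (PresentedMonoid.of rels a * m)) : motive m := by
  induction m using PresentedMonoid.inductionOn with | h w => ?_
  induction w using FreeMonoid.inductionOn' with
  | one => exact one
  | of_mul a w ih =>
    rw [map_mul]
    exact of_mul a _ ih

omit [DecidableEq I] in
theorem raag_of_mul_of_comm {a b : I} (h : A a b = 0) :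
    PresentedMonoid.of (raagRel A) a * PresentedMonoid.of (raagRel A) b =
      PresentedMonoid.of (raagRel A) b * PresentedMonoid.of (raagRel A) a := by
  simp only [PresentedMonoid.of, ← map_mul]
  exact PresentedMonoid.mk_eq_mk_of_rel ⟨a, b, h, rfl, rfl⟩

section RAAG

def raagAction (hA : IsBorcherdsCartan A) : PresentedMonoid (raagRel A) →* Function.End (RCraw I) :=
  PresentedMonoid.lift (M := Function.End (RCraw I)) (fOp A) fun x y ⟨a, b, hab0, hx, hy⟩ => by
    subst hx hy
    by_cases hab : a = b
    · rw [hab]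
    · simp only [map_mul]
      exact funext (fOp_comm hab hab0 ((hA.zero_iff a b).1 hab0))

def raagToRC (hA : IsBorcherdsCartan A) (m : PresentedMonoid (raagRel A)) : RCraw I :=
  raagAction hA m emptyRC

variable (hA : IsBorcherdsCartan A)

theorem raagToRC_one : raagToRC hA 1 = emptyRC := by
  rw [raagToRC, map_one]
  rfl

theorem raagToRC_of_mul (a : I) (m : PresentedMonoid (raagRel A)) :
    raagToRC hA (PresentedMonoid.of _ a * m) = fOp A a (raagToRC hA m) := by
  rw [raagToRC, map_mul]
  rfl

theorem raagToRC_mk (w : FreeMonoid I) :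
    raagToRC hA (PresentedMonoid.mk _ w) = w.toList.foldr (fOp A) emptyRC := by
  induction w using FreeMonoid.inductionOn' with
  | one => exact raagToRC_one hA
  | of_mul a w ih =>
    rw [map_mul, FreeMonoid.toList_of_mul, List.foldr_cons, ← ih]
    exact raagToRC_of_mul hA a _

theorem rcinf_raagToRC (m : PresentedMonoid (raagRel A)) : RCinf A (raagToRC hA m) := by
  induction m using PresentedMonoid.inductionOn' with
  | one => exact raagToRC_one hA ▸ RCinf.empty
  | of_mul a m ih =>
    rw [raagToRC_of_mul]
    exact RCinf.fstep a _ ih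

variable (him : ∀ a, A a a ≤ 0)
include him

theorem admissible_raagToRC (m : PresentedMonoid (raagRel A)) : Admissible A (raagToRC hA m) := by
  induction m using PresentedMonoid.inductionOn' with
  | one => exact raagToRC_one hA ▸ admissible_emptyRC
  | of_mul a m ih =>
    rw [raagToRC_of_mul]
    exact admissible_fOp ih hA him a

theorem eOp_raagToRC_of_mul (a : I) (m : PresentedMonoid (raagRel A)) :
    eOp A a (raagToRC hA (PresentedMonoid.of _ a * m)) = some (raagToRC hA m) := by
  rw [raagToRC_of_mul]
  exact (admissible_raagToRC hA him m).eOp_fOp_self hA him a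

theorem eOp_raagToRC_eq_some_iff {a : I} {m : PresentedMonoid (raagRel A)} {ν : RCraw I} :
    eOp A a (raagToRC hA m) = some ν ↔
      ∃ m', raagToRC hA m' = ν ∧ PresentedMonoid.of _ a * m' = m := by
  refine ⟨fun h => ?_, fun ⟨m', hm', hm⟩ => hm ▸ hm' ▸ eOp_raagToRC_of_mul hA him a m'⟩
  have ha2 : A a a ≠ 2 := by have := him a; omega
  induction m using PresentedMonoid.inductionOn' generalizing ν with
  | one => simp [raagToRC_one, eOp, emptyRC, ha2] at h
  | of_mul b m ih =>
    have hν := admissible_raagToRC hA him m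
    rw [raagToRC_of_mul] at h
    by_cases hab : a = b
    · subst hab
      rw [hν.eOp_fOp_self hA him] at h
      exact ⟨m, Option.some.inj h, rfl⟩
    by_cases hadj : A a b = 0
    · rw [eOp_fOp_comm hab hadj ((hA.zero_iff a b).1 hadj) ha2] at h
      obtain ⟨μ, hμ, rfl⟩ := Option.map_eq_some_iff.1 h
      obtain ⟨m', rfl, rfl⟩ := ih hμ
      refine ⟨PresentedMonoid.of _ b * m', raagToRC_of_mul hA b m', ?_⟩
      rw [← mul_assoc, raag_of_mul_of_comm hadj, mul_assoc]
    · rw [hν.eOp_fOp_of_adjacent hA him hab hadj] at h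
      cases h

theorem raagToRC_injective : Function.Injective (raagToRC hA) := by
  intro m₁ m₂ h
  induction m₁ using PresentedMonoid.inductionOn' generalizing m₂ with
  | one =>
    induction m₂ using PresentedMonoid.inductionOn' with
    | one => rfl
    | of_mul b m _ =>
      have := congrFun h b
      rw [raagToRC_one, raagToRC_of_mul] at this
      exact absurd this.symm (fOp_apply_self_ne_zero b _)
  | of_mul a m₁ ih =>
    have he : eOp A a (raagToRC hA m₂) = some (raagToRC hA m₁) :=
      h ▸ eOp_raagToRC_of_mul hA him a m₁
    obtain ⟨m', hm', rfl⟩ := (eOp_raagToRC_eq_some_iff hA him).1 he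
    rw [ih hm'.symm]

theorem range_raagToRC : Set.range (raagToRC hA) = {ν | RCinf A ν} := by
  refine Set.ext fun ν => ⟨?_, fun h => ?_⟩
  · rintro ⟨m, rfl⟩
    exact rcinf_raagToRC hA m
  induction h with
  | empty => exact ⟨1, raagToRC_one hA⟩
  | fstep a ν _ ih =>
    obtain ⟨m, rfl⟩ := ih
    exact ⟨_, raagToRC_of_mul hA a m⟩
  | estep a ν ν' _ he ih =>
    obtain ⟨m, rfl⟩ := ih
    obtain ⟨m', hm', -⟩ := (eOp_raagToRC_eq_some_iff hA him).1 he
    exact ⟨m', hm'⟩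

end RAAG

/-- In the purely imaginary case, the map from the right-angled Artin monoid
`⟨g_a | g_a g_{a'} = g_{a'} g_a if A a a' = 0⟩` to `RC(∞)` sending the class of a word
`g_{a_1} ⋯ g_{a_r}` to `f_{a_1} ⋯ f_{a_r}(ν_∅, J_∅)` is well defined and a bijection onto
`RC(∞)`. -/
theorem rc_purely_imaginary_raag {I : Type*} [DecidableEq I] (A : I → I → ℤ)
    (hA : IsBorcherdsCartan A) (him : ∀ a : I, A a a ≤ 0) :
    ∃ F : PresentedMonoid (raagRel A) → RCraw I,
      (∀ w : FreeMonoid I,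
        F (PresentedMonoid.mk (raagRel A) w) = w.toList.foldr (fOp A) emptyRC) ∧
      Function.Injective F ∧
      Set.range F = {ν : RCraw I | RCinf A ν} :=
  ⟨raagToRC hA, raagToRC_mk hA, raagToRC_injective hA him, range_raagToRC hA him⟩
end
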